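/- arXiv:0805.2758 — 3 statements merged into one kernel-verified Lean document; each statement's English description precedes it below -/
import Mathlib

section
/- Fix s > s_*, ε ∈ ℝ^r and β ∈ ℝ^r, and let z ∈ e₁t + H_{s,σ} be a 2π-periodic curve with z(t) ∈ V_{s,σ} for all t. Then there exists μ_* > 0 (depending on z) such that for all |μ| < μ_* the following holds: the pair (z, β) satisfies ż(t) = X_{H̃}(z(t)) + Σ_{l=1}^r β_l ∇I^{(l)}(z(t)) for all t, where I^{(l)}(z) := I_l (so ∇I^{(l)} is the constant vector with 1 in the l-th action component and 0 elsewhere), if and only if β = 0 and z is a 2π-periodic solution of ż = X_{H̃}(z). -/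
set_option linter.unusedVariables false

open Real MeasureTheory
noncomputable section

/-- Index set `j ≥ r+1` of the normal modes. -/
abbrev Idx (r : ℕ) := {j : ℕ // r + 1 ≤ j}

/-- Raw (unweighted, coordinatewise) representation of a point of the covering space of
the phase space: actions `I`, (lifted) angles `φ`, and the sequences `p, q`. -/
abbrev Raw (r : ℕ) := (Fin r → ℝ) × (Fin r → ℝ) × (Idx r → ℝ) × (Idx r → ℝ)

/-- The weight `[j]^s e^{σ j}` (here `j ≥ r+1 ≥ 1`, so `[j] = j`). -/
def wt (s σ : ℝ) (j : ℕ) : ℝ := (j : ℝ) ^ s * Real.exp (σ * j)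

/-- The weighted sequence space `ℓ²_{s,σ}`, implemented as `ℓ²` of the weighted
coordinates: an element internally stores the sequence `j ↦ [j]^s e^{σ j} p_j`, and the
actual entry `p_j` is recovered by `Ell2.coord`.  This realizes exactly the Hilbert space
of sequences `p` with `Σ_j [j]^{2s} e^{2σ j} p_j² < ∞`, with the correct norm. -/
def Ell2 (r : ℕ) (s σ : ℝ) : Type := lp (fun _ : Idx r => ℝ) 2

instance (r : ℕ) (s σ : ℝ) : NormedAddCommGroup (Ell2 r s σ) :=
  inferInstanceAs (NormedAddCommGroup (lp (fun _ : Idx r => ℝ) 2))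
instance (r : ℕ) (s σ : ℝ) : NormedSpace ℝ (Ell2 r s σ) :=
  inferInstanceAs (NormedSpace ℝ (lp (fun _ : Idx r => ℝ) 2))

/-- The actual `j`-th entry of `p ∈ ℓ²_{s,σ}`. -/
def Ell2.coord {r : ℕ} {s σ : ℝ} (p : Ell2 r s σ) (j : Idx r) : ℝ :=
  (show lp (fun _ : Idx r => ℝ) 2 from p) j / wt s σ (j : ℕ)

/-- (The covering space of) the phase space `𝒫_{s,σ} = U × 𝕋^r × ℓ²_{s,σ} × ℓ²_{s,σ}`. -/
def PS (r : ℕ) (s σ : ℝ) : Type :=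
  (Fin r → ℝ) × (Fin r → ℝ) × Ell2 r s σ × Ell2 r s σ

instance (r : ℕ) (s σ : ℝ) : NormedAddCommGroup (PS r s σ) :=
  inferInstanceAs (NormedAddCommGroup ((Fin r → ℝ) × (Fin r → ℝ) × Ell2 r s σ × Ell2 r s σ))
instance (r : ℕ) (s σ : ℝ) : NormedSpace ℝ (PS r s σ) :=
  inferInstanceAs (NormedSpace ℝ ((Fin r → ℝ) × (Fin r → ℝ) × Ell2 r s σ × Ell2 r s σ))

/-- The raw coordinates of a phase-space point. -/
def rawOf {r : ℕ} (s σ : ℝ) (z : PS r s σ) : Raw r :=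
  (z.1, z.2.1, fun j => z.2.2.1.coord j, fun j => z.2.2.2.coord j)

/-- The weak scalar product `⟨·,·⟩` (formula (sca.1)). -/
def rpair {r : ℕ} (w w' : Raw r) : ℝ :=
  (∑ i, w.1 i * w'.1 i) + (∑ i, w.2.1 i * w'.2.1 i) +
    (∑' j, w.2.2.1 j * w'.2.2.1 j) + (∑' j, w.2.2.2 j * w'.2.2.2 j)

/-- The Poisson tensor `J(I,φ,p,q) = (-φ, I, -q, p)`. -/
def rJ {r : ℕ} (w : Raw r) : Raw r := (-w.2.1, w.1, -w.2.2.2, w.2.2.1)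

/-- The weak gradient of `H^{(l)}_μ = I_l + Σ_j Ω_j^{(l)} (p_j²+q_j²)/2 + μ F^{(l)}_μ`,
where `G l μ` is (the raw form of) the weak gradient `∇F^{(l)}_μ`. -/
def gradH {r : ℕ} (Ω : Fin r → Idx r → ℝ) (G : Fin r → ℝ → Raw r → Raw r)
    (l : Fin r) (μ : ℝ) (w : Raw r) : Raw r :=
  (Pi.single l 1 + μ • (G l μ w).1,
   μ • (G l μ w).2.1,
   (fun j => Ω l j * w.2.2.1 j) + μ • (G l μ w).2.2.1,
   (fun j => Ω l j * w.2.2.2 j) + μ • (G l μ w).2.2.2)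

/-- The submanifold `N = U × 𝕋^r × {0} × {0}` (in the covering space). -/
def NSet {r : ℕ} (s σ : ℝ) (U : Set (Fin r → ℝ)) : Set (PS r s σ) :=
  {z | z.1 ∈ U ∧ z.2.2.1 = 0 ∧ z.2.2.2 = 0}

/-- `g` is the weak gradient of `f` on `V` (Gateaux form): the directional derivative of
`f` at `z` along `v` is `⟨g(z), v⟩`. -/
def IsWeakGradient {r : ℕ} (s σ : ℝ) (f : Raw r → ℝ) (g : Raw r → Raw r)
    (V : Set (PS r s σ)) : Prop :=
  ∀ z ∈ V, ∀ v : PS r s σ,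
    HasDerivAt (fun h : ℝ => f (rawOf s σ (z + h • v)))
      (rpair (g (rawOf s σ z)) (rawOf s σ v)) 0

/-- Torus periodicity of a function on the covering space. -/
def PhasePeriodic {r : ℕ} (f : Raw r → ℝ) : Prop :=
  ∀ (w : Raw r) (k : Fin r → ℤ),
    f (w.1, w.2.1 + (fun i => 2 * π * (k i)), w.2.2.1, w.2.2.2) = f w

/-- Assumption (A.1): the Hamiltonians `H^{(l)}_μ` pairwise Poisson-commute for `μ`
small enough (expressed on the sets `V s`, `s > s⋆`, through the weak gradients). -/
def AssumptionA1 {r : ℕ} (σ sStar : ℝ) (Ω : Fin r → Idx r → ℝ)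
    (G : Fin r → ℝ → Raw r → Raw r) (V : (s : ℝ) → Set (PS r s σ)) : Prop :=
  ∃ μ₀ > (0:ℝ), ∀ μ : ℝ, |μ| < μ₀ → ∀ l₁ l₂ : Fin r, ∀ s : ℝ, sStar < s → ∀ z ∈ V s,
    rpair (gradH Ω G l₁ μ (rawOf s σ z)) (rJ (gradH Ω G l₂ μ (rawOf s σ z))) = 0

/-- Assumption (A.2): for every `s > s⋆`, `V s` is an open neighborhood of `N` and
`(z,μ) ↦ ∇F^{(l)}_μ(z)` is a `C^∞` map `V_{s,σ} × ℝ → 𝒫_{s+d,σ}` whose raw coordinates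
are `G l μ`, `G l μ` being the weak gradient of `F^{(l)}_μ`. -/
def AssumptionA2 {r : ℕ} (σ sStar d : ℝ) (U : Set (Fin r → ℝ))
    (F : Fin r → ℝ → Raw r → ℝ) (G : Fin r → ℝ → Raw r → Raw r)
    (V : (s : ℝ) → Set (PS r s σ)) : Prop :=
  ∀ s : ℝ, sStar < s →
    IsOpen (V s) ∧ NSet s σ U ⊆ V s ∧
    ∀ l : Fin r,
      (∃ Ghat : PS r s σ × ℝ → PS r (s + d) σ,
        ContDiffOn ℝ (⊤ : ℕ∞) Ghat ((V s) ×ˢ (Set.univ : Set ℝ)) ∧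
        ∀ z ∈ V s, ∀ μ : ℝ, rawOf (s + d) σ (Ghat (z, μ)) = G l μ (rawOf s σ z)) ∧
      ∀ μ : ℝ, IsWeakGradient s σ (F l μ) (G l μ) (V s)

/-- The nonresonant set `𝒩(γ,τ,n)` of formula (e.15). -/
def resSet (r : ℕ) (Ω : Fin r → Idx r → ℝ) (γ τ : ℝ) (n : Fin r → ℤ) :
    Set (Fin r → ℝ) :=
  {ε | ∀ (k : ℤ) (j : Idx r),
    γ / ((j : ℕ) : ℝ) ^ τ ≤
      |(k : ℝ) * (∑ l, ((n l : ℝ))) - ∑ l, ((n l : ℝ) + ε l) * Ω l j|}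

/-- Assumption (A.3) for a given `n, γ, τ`: the nonresonant frequencies accumulate at the
origin from every direction. -/
def AssumptionA3 {r : ℕ} (Ω : Fin r → Idx r → ℝ) (γ τ : ℝ) (n : Fin r → ℤ) : Prop :=
  ∀ O : Set (Fin r → ℝ), IsOpen O → (0 : Fin r → ℝ) ∈ closure O →
    (0 : Fin r → ℝ) ∈ closure ((resSet r Ω γ τ n ∩ O) \ {0})

/-- The average `⟨F_n⟩(a,ψ)` of `F_n = Σ_l n_l F^{(l)}_0` along the periodic flow
`t ↦ (a, n t + ψ, 0, 0)` (formula (e.9)). -/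
def Favg {r : ℕ} (F : Fin r → ℝ → Raw r → ℝ) (n : Fin r → ℤ) (a ψ : Fin r → ℝ) : ℝ :=
  (1 / (2 * π)) *
    ∫ t in (0:ℝ)..(2 * π),
      ∑ l, (n l : ℝ) * F l 0 (a, (fun i => (n i : ℝ) * t + ψ i), 0, 0)

/-- The gradient `∂f/∂a` of a function of the actions. -/
def gradA {r : ℕ} (f : (Fin r → ℝ) → ℝ) (a : Fin r → ℝ) : Fin r → ℝ :=
  fun i => fderiv ℝ f a (Pi.single i 1)

/-- The Hessian `∂²f/∂a²`. -/
def hessA {r : ℕ} (f : (Fin r → ℝ) → ℝ) (a : Fin r → ℝ) : Matrix (Fin r) (Fin r) ℝ :=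
  Matrix.of fun i i' => fderiv ℝ (fun b => gradA f b i) a (Pi.single i' 1)

/-- Assumption (A.4) (given `n`): `⟨F_n⟩` is independent of `ψ`, smooth, with everywhere
nondegenerate Hessian and injective gradient on `U`. -/
def AssumptionA4 {r : ℕ} (U : Set (Fin r → ℝ)) (F : Fin r → ℝ → Raw r → ℝ)
    (n : Fin r → ℤ) : Prop :=
  (∀ (a ψ : Fin r → ℝ), Favg F n a ψ = Favg F n a 0) ∧
  ContDiffOn ℝ (⊤ : ℕ∞) (fun a => Favg F n a 0) U ∧
  (∀ a ∈ U, (hessA (fun b => Favg F n b 0) a).det ≠ 0) ∧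
  Set.InjOn (gradA (fun b => Favg F n b 0)) U

/-- The set `𝒜(n) = ⋃_{0<|μ|<1} { -μ ∂⟨F_n⟩/∂a(a) : a ∈ U' }` of formula (e.34). -/
def Aset {r : ℕ} (F : Fin r → ℝ → Raw r → ℝ) (n : Fin r → ℤ)
    (U' : Set (Fin r → ℝ)) : Set (Fin r → ℝ) :=
  {ε | ∃ μ : ℝ, 0 < |μ| ∧ |μ| < 1 ∧ ∃ a ∈ U', ε = -μ • gradA (fun b => Favg F n b 0) a}

/-- Translation of the (lifted) angles by `2π k`, `k ∈ ℤ^r`. -/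
def tTrans {r : ℕ} {s σ : ℝ} (k : Fin r → ℤ) (z : PS r s σ) : PS r s σ :=
  (z.1, z.2.1 + (fun i => 2 * π * (k i)), z.2.2.1, z.2.2.2)

/-- The (saturated) subset of the covering space determined by a torus parametrization
`Z : ℝ^r → 𝒫_{s,σ}`; it represents the torus `Z(𝕋^r)` in the phase space. -/
def satTorus {r : ℕ} {s σ : ℝ} (Z : (Fin r → ℝ) → PS r s σ) : Set (PS r s σ) :=
  {z | ∃ (θ : Fin r → ℝ) (k : Fin r → ℤ), z = tTrans k (Z θ)}

/-- `Z : ℝ^r → 𝒫_{s,σ}` is a smooth embedding of the torus `𝕋^r`: it is `C^∞`,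
equivariant under the deck transformations, injective modulo `2πℤ^r`, and an immersion. -/
def IsTorusEmbedding {r : ℕ} {s σ : ℝ} (Z : (Fin r → ℝ) → PS r s σ) : Prop :=
  ContDiff ℝ (⊤ : ℕ∞) Z ∧
  (∀ (θ : Fin r → ℝ) (k : Fin r → ℤ), Z (θ + fun i => 2 * π * (k i)) = tTrans k (Z θ)) ∧
  (∀ θ θ' : Fin r → ℝ, (∃ k : Fin r → ℤ, Z θ' = tTrans k (Z θ)) →
      ∃ k : Fin r → ℤ, θ' = θ + fun i => 2 * π * (k i)) ∧
  (∀ θ : Fin r → ℝ, Function.Injective (fderiv ℝ Z θ))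

/-- The reference torus `{(a, ψ, 0, 0) : ψ ∈ 𝕋^r}` (as a saturated set in the covering
space). -/
def refTorus {r : ℕ} (s σ : ℝ) (a : Fin r → ℝ) : Set (PS r s σ) :=
  {z | z.1 = a ∧ z.2.2.1 = 0 ∧ z.2.2.2 = 0}

/-- `z` is a solution curve of the (formal) vector field `X` given in raw coordinates:
at each time the derivative of `z` exists in `𝒫_{s,σ}` and its raw coordinates are
`X(z(t))`. -/
def SolvesODE {r : ℕ} {s σ : ℝ} (z : ℝ → PS r s σ) (X : Raw r → Raw r) : Prop :=
  ∀ t : ℝ, ∃ v : PS r s σ, HasDerivAt z v t ∧ rawOf s σ v = X (rawOf s σ (z t))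

/-- A set `T` is invariant under the (Hamiltonian) vector field `X`: every point of `T`
lies on a solution curve of `X` entirely contained in `T`. -/
def InvariantUnder {r : ℕ} {s σ : ℝ} (X : Raw r → Raw r) (T : Set (PS r s σ)) : Prop :=
  ∀ z₀ ∈ T, ∃ z : ℝ → PS r s σ, z 0 = z₀ ∧ (∀ t, z t ∈ T) ∧ SolvesODE z X

/-- The Euclidean norm of `ε ∈ ℝ^r` (used for the balls `B_μ`). -/
def enorm' {r : ℕ} (ε : Fin r → ℝ) : ℝ := Real.sqrt (∑ i, (ε i) ^ 2)

/-- The vector `e₁ = (1,0,…,0) ∈ ℝ^r`. -/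
def e1R (r : ℕ) : Fin r → ℝ := fun i => if (i : ℕ) = 0 then 1 else 0

/-- The vector `e₁ = (1,0,…,0) ∈ ℤ^r`. -/
def e1Z (r : ℕ) : Fin r → ℤ := fun i => if (i : ℕ) = 0 then 1 else 0

/-- The weak gradient of `H̃ = Σ_l c_l H^{(l)}_μ` (for `c = n + ε`); in particular for
`c_l = (e₁)_l + ε_l` this is the gradient of
`H̃ = (1+ε₁)I₁ + Σ_{l≥2} ε_l I_l + Σ_j Ω̃_j(ε)(p_j²+q_j²)/2 + μ F̃_μ`. -/
def gradTilde {r : ℕ} (Ω : Fin r → Idx r → ℝ) (G : Fin r → ℝ → Raw r → Raw r)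
    (c : Fin r → ℝ) (μ : ℝ) (w : Raw r) : Raw r :=
  ∑ l, c l • gradH Ω G l μ w

/-- The frequencies `Ω̃_j(ε) = (1+ε₁)Ω_j^{(1)} + Σ_{l≥2} ε_l Ω_j^{(l)}`. -/
def tOm {r : ℕ} (Ω : Fin r → Idx r → ℝ) (ε : Fin r → ℝ) (j : Idx r) : ℝ :=
  ∑ l, (e1R r l + ε l) * Ω l j

/-- A curve `z` belongs to `e₁ t + (2π-periodic functions)`:
`z(t+2π) = z(t) + (0, 2π e₁, 0, 0)`. -/
def E1Periodic {r : ℕ} {s σ : ℝ} (z : ℝ → PS r s σ) : Prop :=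
  ∀ t : ℝ, z (t + 2 * π) = tTrans (e1Z r) (z t)

/- The action equation of `ż = X_{H̃}(z) + Σ_l β_l ∇I^{(l)}(z)` reads `İ = -μ ∂_φ F̃_μ(z) + β`,
since `H̃` depends on the angles only through `μ F̃_μ`. By (A.2), `∂_φ F̃_μ(z(t))` is continuous in
`(t, μ)`, hence bounded by some `C` on `[0, 2π] × [-1, 1]`. As `I` is `2π`-periodic along `z`,
integrating over one period gives `2π ‖β‖ ≤ 2π |μ| C`, impossible for `β ≠ 0` once
`|μ| < ‖β‖ / C`. -/

theorem norm_le_of_hasDerivAt_add_of_eq {E : Type*} [NormedAddCommGroup E] [NormedSpace ℝ E]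
    {f g : ℝ → E} {b : E} {T K : ℝ} (hT : 0 < T) (hfT : f T = f 0)
    (hf : ∀ t, HasDerivAt f (g t + b) t) (hg : ∀ t ∈ Set.Ico 0 T, ‖g t‖ ≤ K) :
    ‖b‖ ≤ K := by
  have hderiv : ∀ t ∈ Set.Icc 0 T,
      HasDerivWithinAt (fun t => f t - t • b) (g t) (Set.Icc 0 T) t := fun t _ => by
    convert ((hf t).sub ((hasDerivAt_id t).smul_const b)).hasDerivWithinAt using 1
    · rfl
    · simp
  have hmvt := norm_image_sub_le_of_norm_deriv_le_segment' hderiv hg T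
    (Set.right_mem_Icc.mpr hT.le)
  rw [hfT, zero_smul, sub_zero, sub_sub_cancel_left, norm_neg, norm_smul,
    Real.norm_of_nonneg hT.le, sub_zero, mul_comm K] at hmvt
  exact le_of_mul_le_mul_left hmvt hT

section PhaseSpace

variable {r : ℕ} {s σ : ℝ}

theorem SolvesODE.continuous {z : ℝ → PS r s σ} {X : Raw r → Raw r} (h : SolvesODE z X) :
    Continuous z :=
  continuous_iff_continuousAt.mpr fun t => (h t).choose_spec.1.continuousAt

theorem SolvesODE.hasDerivAt_fst {z : ℝ → PS r s σ} {X : Raw r → Raw r} (h : SolvesODE z X)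
    (t : ℝ) : HasDerivAt (fun t => (z t).1) (X (rawOf s σ (z t))).1 t := by
  obtain ⟨v, hv, hvX⟩ := h t
  rw [← hvX]
  exact (ContinuousLinearMap.fst ℝ _ _).hasFDerivAt.comp_hasDerivAt t hv

theorem E1Periodic.fst_add_two_pi {z : ℝ → PS r s σ} (h : E1Periodic z) (t : ℝ) :
    (z (t + 2 * π)).1 = (z t).1 := by
  rw [h t]
  rfl

theorem gradTilde_snd_fst (Ω : Fin r → Idx r → ℝ) (G : Fin r → ℝ → Raw r → Raw r)
    (c : Fin r → ℝ) (μ : ℝ) (w : Raw r) :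
    (gradTilde Ω G c μ w).2.1 = μ • ∑ l, c l • (G l μ w).2.1 := by
  simp only [gradTilde, gradH, Prod.snd_sum, Prod.fst_sum, Prod.smul_snd, Prod.smul_fst,
    Finset.smul_sum, smul_comm μ]

theorem continuous_angle_of_continuousOn_lift {s' : ℝ} {G : ℝ → Raw r → Raw r}
    {V : Set (PS r s σ)} {Ghat : PS r s σ × ℝ → PS r s' σ}
    (hGhat : ContinuousOn Ghat (V ×ˢ Set.univ))
    (hGhat_raw : ∀ z ∈ V, ∀ μ, rawOf s' σ (Ghat (z, μ)) = G μ (rawOf s σ z))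
    {z : ℝ → PS r s σ} (hz : Continuous z) (hzV : ∀ t, z t ∈ V) :
    Continuous fun x : ℝ × ℝ => (G x.2 (rawOf s σ (z x.1))).2.1 := by
  have hlift : (fun x : ℝ × ℝ => (G x.2 (rawOf s σ (z x.1))).2.1) =
      fun x => (Ghat (z x.1, x.2)).2.1 := by
    funext x
    rw [← hGhat_raw _ (hzV x.1)]
    rfl
  rw [hlift]
  refine (continuous_fst.comp continuous_snd).comp
    (hGhat.comp_continuous ((hz.comp continuous_fst).prodMk continuous_snd) ?_)
  exact fun x => ⟨hzV x.1, trivial⟩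

theorem norm_multiplier_le {Ω : Fin r → Idx r → ℝ} {G : Fin r → ℝ → Raw r → Raw r}
    {c β : Fin r → ℝ} {μ C : ℝ} {z : ℝ → PS r s σ} (hzper : E1Periodic z)
    (hsol : SolvesODE z fun w => rJ (gradTilde Ω G c μ w) + ((β, 0, 0, 0) : Raw r))
    (hC : ∀ t ∈ Set.Ico 0 (2 * π), ‖∑ l, c l • (G l μ (rawOf s σ (z t))).2.1‖ ≤ C) :
    ‖β‖ ≤ |μ| * C := by
  refine norm_le_of_hasDerivAt_add_of_eq (f := fun t => (z t).1)
    (g := fun t => -(μ • ∑ l, c l • (G l μ (rawOf s σ (z t))).2.1)) Real.two_pi_pos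
    (by simpa using hzper.fst_add_two_pi 0) (fun t => ?_) (fun t ht => ?_)
  · simpa [rJ, gradTilde_snd_fst] using hsol.hasDerivAt_fst t
  · rw [norm_neg, norm_smul, Real.norm_eq_abs]
    exact mul_le_mul_of_nonneg_left (hC t ht) (abs_nonneg μ)

end PhaseSpace

theorem multipliers_vanish_general
    (r : ℕ) (σ d sStar : ℝ)
    (U : Set (Fin r → ℝ))
    (Ω : Fin r → Idx r → ℝ)
    (F : Fin r → ℝ → Raw r → ℝ) (G : Fin r → ℝ → Raw r → Raw r)
    (V : (s : ℝ) → Set (PS r s σ))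
    (hA2 : AssumptionA2 σ sStar d U F G V)
    (s : ℝ) (hs : sStar < s)
    (ε β : Fin r → ℝ)
    (z : ℝ → PS r s σ) (hzper : E1Periodic z) (hzmem : ∀ t : ℝ, z t ∈ V s) :
    ∃ μStar > (0:ℝ), ∀ μ : ℝ, |μ| < μStar →
      (SolvesODE z
          (fun w => rJ (gradTilde Ω G (fun l => e1R r l + ε l) μ w) +
            ((β, 0, 0, 0) : Raw r))
        ↔ (β = 0 ∧
            SolvesODE z (fun w => rJ (gradTilde Ω G (fun l => e1R r l + ε l) μ w)))) := by
  by_cases hβ : β = 0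
  · subst hβ
    exact ⟨1, one_pos, fun μ _ => by simp only [true_and, Prod.mk_zero_zero, add_zero]⟩
  by_cases hz : Continuous z
  swap
  · exact ⟨1, one_pos, fun μ _ =>
      iff_of_false (fun h => hz h.continuous) (fun h => hz h.2.continuous)⟩
  obtain ⟨-, -, hGhat⟩ := hA2 s hs
  choose Ghat hGhat_smooth hGhat_raw using fun l => (hGhat l).1
  set c : Fin r → ℝ := fun l => e1R r l + ε l
  have hcont : ContinuousOn
      (fun x : ℝ × ℝ => ∑ l, c l • (G l x.2 (rawOf s σ (z x.1))).2.1)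
      (Set.Icc 0 (2 * π) ×ˢ Set.Icc (-1) 1) :=
    (continuous_finsetSum _ fun l _ =>
      (continuous_angle_of_continuousOn_lift (hGhat_smooth l).continuousOn
        (hGhat_raw l) hz hzmem).const_smul (c l)).continuousOn
  obtain ⟨C, hC⟩ := (isCompact_Icc.prod isCompact_Icc).exists_bound_of_continuousOn hcont
  have hβpos : 0 < ‖β‖ := norm_pos_iff.mpr hβ
  refine ⟨min 1 (‖β‖ / (|C| + 1)), by positivity, fun μ hμ => iff_of_false (fun hsol => ?_)
    (fun h => hβ h.1)⟩
  have hμ1 : |μ| ≤ 1 := hμ.le.trans (min_le_left _ _)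
  have hβle := norm_multiplier_le hzper hsol fun t ht =>
    hC (t, μ) ⟨Set.Ico_subset_Icc_self ht, abs_le.mp hμ1⟩
  have hμβ : |μ| * (|C| + 1) < ‖β‖ :=
    (lt_div_iff₀ (by positivity)).mp (hμ.trans_le (min_le_right _ _))
  nlinarith [le_abs_self C, abs_nonneg μ]

/-- **Lemma 3.2: the multipliers `β` vanish.**
In the setting (A.1)–(A.2), fix `s > s⋆`, `ε, β ∈ ℝ^r`, and a `2π`-periodic curve
`z ∈ e₁ t + H_{s,σ}` with `z(t) ∈ V_{s,σ}` for all `t`.  Then there is `μ⋆ > 0`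
(depending on `z`) such that for `|μ| < μ⋆` the pair `(z, β)` solves
`ż = X_{H̃}(z) + Σ_l β_l ∇I^{(l)}(z)` if and only if `β = 0` and `z` is a `2π`-periodic
solution of `ż = X_{H̃}(z)`. -/
theorem multipliers_vanish
    (r : ℕ) (hr : 1 ≤ r) (σ d sStar : ℝ) (hσ : 0 ≤ σ) (hd : 0 ≤ d)
    (U : Set (Fin r → ℝ)) (hUo : IsOpen U) (hUne : U.Nonempty)
    (Ω : Fin r → Idx r → ℝ)
    (F : Fin r → ℝ → Raw r → ℝ) (G : Fin r → ℝ → Raw r → Raw r)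
    (V : (s : ℝ) → Set (PS r s σ))
    (hA1 : AssumptionA1 σ sStar Ω G V)
    (hA2 : AssumptionA2 σ sStar d U F G V)
    (s : ℝ) (hs : sStar < s)
    (ε β : Fin r → ℝ)
    (z : ℝ → PS r s σ) (hzper : E1Periodic z) (hzmem : ∀ t : ℝ, z t ∈ V s) :
    ∃ μStar > (0:ℝ), ∀ μ : ℝ, |μ| < μStar →
      (SolvesODE z
          (fun w => rJ (gradTilde Ω G (fun l => e1R r l + ε l) μ w) +
            ((β, 0, 0, 0) : Raw r))
        ↔ (β = 0 ∧
            SolvesODE z (fun w => rJ (gradTilde Ω G (fun l => e1R r l + ε l) μ w)))) :=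
  multipliers_vanish_general r σ d sStar U Ω F G V hA2 s hs ε β z hzper hzmem

end
end

section
/- Let a₁, a₋₁ ≥ 0 and define u(x,t) := √(a₋₁) cos(x−t)/√π + √(a₁) sin(x+t)/√π. Then (1/2π) ∫₀^{2π} ∫_{−π}^{π} u(x,t)⁴/4 dx dt = (3/(16π)) (a₁² + 4 a₁ a₋₁ + a₋₁²). In particular, as a function of (a₁, a₋₁) ∈ (0,∞)², this average has everywhere nondegenerate Hessian and injective gradient. -/
open Real intervalIntegral

/-- The averaged quartic part `⟨F⟩(a₁, a₋₁) = (3/(16π)) (a₁² + 4 a₁ a₋₁ + a₋₁²)`. -/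
noncomputable def waveAvgF : ℝ × ℝ → ℝ :=
  fun a => 3 / (16 * π) * (a.1 ^ 2 + 4 * a.1 * a.2 + a.2 ^ 2)

/-! At each time `t`, `u(·, t) = P cos x + Q sin x`; writing `(P, Q)` in polar form makes the
integrand a translate of `(P² + Q²)² cos⁴`, so by periodicity the spatial integral is
`(3π/4)(P² + Q²)²`, where `P² + Q² = (a₁ + a₋₁ + 2√(a₁a₋₁) sin 2t)/π`. Averaging the square over
`t` kills the cross term and halves `(2√(a₁a₋₁))²`. The result is a binary quadratic form
`α a₁² + β a₁a₋₁ + γ a₋₁²` with `4αγ - β² = -27/(64π²) ≠ 0`, so its Hessian is a nonsingular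
constant and its gradient an injective linear map. -/

theorem integral_cos_pow_four_neg_pi_pi : ∫ x in (-π)..π, cos x ^ 4 = 3 * π / 4 := by
  rw [show (4 : ℕ) = 2 + 2 from rfl, integral_cos_pow]
  simp only [integral_cos_sq, cos_neg, sin_neg, sin_pi, cos_pi]
  push_cast
  ring

theorem integral_cos_sub_pow_four (φ : ℝ) : ∫ x in (-π)..π, cos (x - φ) ^ 4 = 3 * π / 4 := by
  have hper : Function.Periodic (fun x => cos x ^ 4) (2 * π) := fun x => by
    simp only [cos_add_two_pi]
  rw [integral_comp_sub_right (fun x => cos x ^ 4), ← integral_cos_pow_four_neg_pi_pi]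
  convert hper.intervalIntegral_add_eq (-π - φ) (-π) using 2 <;> ring

theorem integral_mul_cos_add_mul_sin_pow_four (P Q : ℝ) :
    ∫ x in (-π)..π, (P * cos x + Q * sin x) ^ 4 = 3 * π / 4 * (P ^ 2 + Q ^ 2) ^ 2 := by
  set z : ℂ := ⟨P, Q⟩
  have hrot : ∀ x, P * cos x + Q * sin x = ‖z‖ * cos (x - z.arg) := fun x => by
    rw [cos_sub]
    linear_combination (-cos x) * Complex.norm_mul_cos_arg z - sin x * Complex.norm_mul_sin_arg z
  have hnorm : ‖z‖ ^ 2 = P ^ 2 + Q ^ 2 := by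
    rw [Complex.sq_norm, Complex.normSq_apply]; ring
  simp_rw [hrot, mul_pow, integral_const_mul, integral_cos_sub_pow_four,
    show ‖z‖ ^ 4 = (‖z‖ ^ 2) ^ 2 by ring, hnorm]
  ring

theorem integral_add_mul_sin_two_mul_sq (A B : ℝ) :
    ∫ t in (0:ℝ)..(2 * π), (A + B * sin (2 * t)) ^ 2 = 2 * π * A ^ 2 + π * B ^ 2 := by
  have hexp : ∀ t, (A + B * sin (2 * t)) ^ 2
      = A ^ 2 + 2 * A * B * sin (2 * t) + B ^ 2 * sin (2 * t) ^ 2 := fun t => by ring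
  have hcos : cos (2 * (2 * π)) = 1 := by rw [cos_two_mul, cos_two_pi]; norm_num
  have hsin : sin (2 * (2 * π)) = 0 := by rw [sin_two_mul, sin_two_pi]; simp
  simp_rw [hexp]
  rw [integral_add, integral_add, integral_const_mul, integral_const_mul,
    integral_comp_mul_left (fun t => sin t) two_ne_zero,
    integral_comp_mul_left (fun t => sin t ^ 2) two_ne_zero]
  · simp only [integral_sin, integral_sin_sq, integral_const, smul_eq_mul, hcos, hsin, mul_zero,
      cos_zero, sin_zero]
    ring
  all_goals exact Continuous.intervalIntegrable (by fun_prop) _ _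

theorem integral_mul_cos_sub_add_mul_sin_add_pow_four (p q t : ℝ) :
    ∫ x in (-π)..π, (p * cos (x - t) + q * sin (x + t)) ^ 4
      = 3 * π / 4 * (p ^ 2 + q ^ 2 + 2 * p * q * sin (2 * t)) ^ 2 := by
  have hsplit : ∀ x, p * cos (x - t) + q * sin (x + t)
      = (p * cos t + q * sin t) * cos x + (p * sin t + q * cos t) * sin x := fun x => by
    rw [cos_sub, sin_add]; ring
  have hamp : (p * cos t + q * sin t) ^ 2 + (p * sin t + q * cos t) ^ 2
      = p ^ 2 + q ^ 2 + 2 * p * q * sin (2 * t) := by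
    rw [sin_two_mul]; linear_combination (p ^ 2 + q ^ 2) * sin_sq_add_cos_sq t
  simp_rw [hsplit, integral_mul_cos_add_mul_sin_pow_four, hamp]

def binaryQuadForm (α β γ : ℝ) (b : ℝ × ℝ) : ℝ :=
  α * b.1 ^ 2 + β * b.1 * b.2 + γ * b.2 ^ 2

namespace binaryQuadForm

variable (α β γ : ℝ)

theorem fderiv_apply (a v : ℝ × ℝ) :
    fderiv ℝ (binaryQuadForm α β γ) a v
      = (2 * α * a.1 + β * a.2) * v.1 + (β * a.1 + 2 * γ * a.2) * v.2 := by
  have hfst : HasFDerivAt (fun b : ℝ × ℝ => b.1) (ContinuousLinearMap.fst ℝ ℝ ℝ) a :=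
    hasFDerivAt_fst
  have hsnd : HasFDerivAt (fun b : ℝ × ℝ => b.2) (ContinuousLinearMap.snd ℝ ℝ ℝ) a :=
    hasFDerivAt_snd
  have h : HasFDerivAt (binaryQuadForm α β γ) _ a :=
    (((hfst.pow 2).const_mul α).add ((hfst.const_mul β).mul hsnd)).add ((hsnd.pow 2).const_mul γ)
  rw [h.fderiv]
  simp only [Nat.add_one_sub_one, pow_one, nsmul_eq_mul, Nat.cast_ofNat,
    add_apply, smul_apply, ContinuousLinearMap.coe_fst',
    ContinuousLinearMap.coe_snd', smul_eq_mul]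
  ring

/-- The formula of `fderiv_apply` is symmetric in `a` and `v`, so `b ↦ D q b v` is the continuous
linear map `D q v`: the Hessian of `q` is constant. -/
theorem fderiv_fderiv_apply (a v w : ℝ × ℝ) :
    fderiv ℝ (fun b => fderiv ℝ (binaryQuadForm α β γ) b v) a w
      = fderiv ℝ (binaryQuadForm α β γ) v w := by
  have hsymm : (fun b => fderiv ℝ (binaryQuadForm α β γ) b v) = fderiv ℝ (binaryQuadForm α β γ) v :=
    funext fun b => by simp only [fderiv_apply]; ring
  rw [hsymm, ContinuousLinearMap.fderiv]

theorem det_hessian (a : ℝ × ℝ) :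
    Matrix.det
      !![fderiv ℝ (fun b => fderiv ℝ (binaryQuadForm α β γ) b (1, 0)) a (1, 0),
         fderiv ℝ (fun b => fderiv ℝ (binaryQuadForm α β γ) b (1, 0)) a (0, 1);
         fderiv ℝ (fun b => fderiv ℝ (binaryQuadForm α β γ) b (0, 1)) a (1, 0),
         fderiv ℝ (fun b => fderiv ℝ (binaryQuadForm α β γ) b (0, 1)) a (0, 1)]
      = 4 * α * γ - β ^ 2 := by
  simp only [Matrix.det_fin_two_of, fderiv_fderiv_apply]
  simp only [fderiv_apply]
  ring

theorem injective_gradient {α β γ : ℝ} (hdisc : 4 * α * γ - β ^ 2 ≠ 0) :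
    Function.Injective fun a =>
      (fderiv ℝ (binaryQuadForm α β γ) a (1, 0), fderiv ℝ (binaryQuadForm α β γ) a (0, 1)) := by
  intro a b hab
  simp only [fderiv_apply, Prod.mk.injEq] at hab
  obtain ⟨e1, e2⟩ := hab
  have h1 : (4 * α * γ - β ^ 2) * a.1 = (4 * α * γ - β ^ 2) * b.1 := by
    linear_combination 2 * γ * e1 - β * e2
  have h2 : (4 * α * γ - β ^ 2) * a.2 = (4 * α * γ - β ^ 2) * b.2 := by
    linear_combination 2 * α * e2 - β * e1
  exact Prod.ext (mul_left_cancel₀ hdisc h1) (mul_left_cancel₀ hdisc h2)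

end binaryQuadForm

theorem waveAvgF_eq_binaryQuadForm :
    waveAvgF = binaryQuadForm (3 / (16 * π)) (3 / (4 * π)) (3 / (16 * π)) := by
  funext a
  simp only [waveAvgF, binaryQuadForm]
  field_simp
  ring

theorem waveAvgF_disc_ne_zero :
    4 * (3 / (16 * π)) * (3 / (16 * π)) - (3 / (4 * π)) ^ 2 ≠ 0 := by
  have h : 4 * (3 / (16 * π)) * (3 / (16 * π)) - (3 / (4 * π)) ^ 2 = -27 / (64 * π ^ 2) := by
    field_simp; ring
  rw [h]
  exact div_ne_zero (by norm_num) (by positivity)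

/-- **Time average of the quartic nonlinearity on the 2-torus of the wave equation.**
For `u(x,t) = √a₋ cos(x-t)/√π + √a₊ sin(x+t)/√π` (amplitudes `a₊ = a₁`, `a₋ = a₋₁ ≥ 0`) one has
`(1/2π) ∫₀^{2π} ∫_{-π}^{π} u⁴/4 dx dt = (3/(16π)) (a₁² + 4a₁a₋₁ + a₋₁²)`;
moreover, on `(0,∞)²` this function of `(a₁, a₋₁)` has everywhere nondegenerate Hessian
and injective gradient. -/
theorem wave_average_nonlinearity :
    (∀ a1 am1 : ℝ, 0 ≤ a1 → 0 ≤ am1 →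
      (1 / (2 * π)) * ∫ t in (0:ℝ)..(2 * π), (∫ x in (-π)..π,
          (Real.sqrt am1 * Real.cos (x - t) / Real.sqrt π +
           Real.sqrt a1 * Real.sin (x + t) / Real.sqrt π) ^ 4 / 4)
        = waveAvgF (a1, am1)) ∧
    -- nondegenerate Hessian everywhere on (0,∞)²
    (∀ a ∈ Set.Ioi (0:ℝ) ×ˢ Set.Ioi (0:ℝ),
      (Matrix.det
        !![fderiv ℝ (fun b => fderiv ℝ waveAvgF b (1, 0)) a (1, 0),
           fderiv ℝ (fun b => fderiv ℝ waveAvgF b (1, 0)) a (0, 1);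
           fderiv ℝ (fun b => fderiv ℝ waveAvgF b (0, 1)) a (1, 0),
           fderiv ℝ (fun b => fderiv ℝ waveAvgF b (0, 1)) a (0, 1)]) ≠ 0) ∧
    -- injective gradient on (0,∞)²
    Set.InjOn (fun a => (fderiv ℝ waveAvgF a (1, 0), fderiv ℝ waveAvgF a (0, 1)))
      (Set.Ioi (0:ℝ) ×ˢ Set.Ioi (0:ℝ)) := by
  have hdisc := waveAvgF_disc_ne_zero
  refine ⟨fun a1 am1 ha1 ham1 => ?_, fun a _ => ?_, ?_⟩
  · simp_rw [mul_div_right_comm _ (cos _), mul_div_right_comm _ (sin _), integral_div,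
      integral_mul_cos_sub_add_mul_sin_add_pow_four, integral_const_mul,
      integral_add_mul_sin_two_mul_sq]
    simp only [mul_pow, div_pow, sq_sqrt ha1, sq_sqrt ham1, sq_sqrt pi_pos.le, waveAvgF]
    field_simp
    ring
  · rw [waveAvgF_eq_binaryQuadForm, binaryQuadForm.det_hessian]
    exact hdisc
  · rw [waveAvgF_eq_binaryQuadForm]
    exact (binaryQuadForm.injective_gradient hdisc).injOn
end

section
/- Let a₁, a₂, a₃ ≥ 0 and define u(x,t) := −( √(a₁) cos(x+t) + √(a₂) cos(2x) + √(a₃) cos(3x) )/√π and v(x,t) := ( √(a₁) sin(x+t) + √(a₂) sin(2x) + √(a₃) sin(3x) )/√π. Then (1/2π) ∫₀^{2π} ∫_{−π}^{π} (u(x,t)² + v(x,t)²)²/4 dx dt = (1/(2π)) ( a₁² + a₂² + a₃² + 4a₁a₂ + 4a₂a₃ + 4a₁a₃ ). In particular this quadratic form in (a₁,a₂,a₃) is nondegenerate. -/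
/-!
With `cⱼ = √aⱼ`, `π (u² + v²)` is the squared modulus of
`c₁ e^{i(x+t)} + c₂ e^{2ix} + c₃ e^{3ix}`, i.e.
`a₁ + a₂ + a₃ + 2 c₁c₂ cos (x - t) + 2 c₁c₃ cos (2x - t) + 2 c₂c₃ cos x`. Squaring and applying
product-to-sum formulas writes the square as a constant plus cosines of nonzero integer frequency
in `x`, which integrate to zero over `[-π, π]`. The constant still contains `4 c₁c₂ · c₂c₃ cos t`,
which in turn averages to zero over `t ∈ [0, 2π]`.
-/

open Real

theorem two_mul_cos_mul_cos_of_eq {A B C D : ℝ} (hC : A - B = C) (hD : A + B = D) :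
    2 * cos A * cos B = cos C + cos D := by
  rw [← hC, ← hD, cos_sub, cos_add]
  ring

theorem sq_add_sq_three_cos_sin (a b c α β γ : ℝ) :
    (a * cos α + b * cos β + c * cos γ) ^ 2 + (a * sin α + b * sin β + c * sin γ) ^ 2
      = a ^ 2 + b ^ 2 + c ^ 2 + 2 * (a * b) * cos (β - α) + 2 * (a * c) * cos (γ - α)
        + 2 * (b * c) * cos (γ - β) := by
  rw [cos_sub β, cos_sub γ, cos_sub γ]
  linear_combination a ^ 2 * sin_sq_add_cos_sq α + b ^ 2 * sin_sq_add_cos_sq β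
    + c ^ 2 * sin_sq_add_cos_sq γ

theorem integral_cos_nat_mul_sub_eq_zero {n : ℕ} (hn : n ≠ 0) (s : ℝ) :
    ∫ x in (-π)..π, cos (n * x - s) = 0 := by
  rw [intervalIntegral.integral_comp_mul_sub cos (Nat.cast_ne_zero.mpr hn),
    integral_cos, show (n : ℝ) * π - s = (n * -π - s) + n * (2 * π) by ring,
    sin_periodic.nat_mul n, sub_self, smul_zero]

theorem integral_const_add_sum_mul_cos {ι : Type*} (s : Finset ι) (c : ℝ) (q φ : ι → ℝ)
    (n : ι → ℕ) (hn : ∀ i ∈ s, n i ≠ 0) :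
    ∫ x in (-π)..π, (c + ∑ i ∈ s, q i * cos (n i * x - φ i)) = 2 * π * c := by
  have hterm : ∀ i ∈ s, IntervalIntegrable (fun x => q i * cos (n i * x - φ i))
      MeasureTheory.volume (-π) π :=
    fun i _ => (by fun_prop : Continuous _).intervalIntegrable _ _
  have hsum : IntervalIntegrable (fun x => ∑ i ∈ s, q i * cos (n i * x - φ i))
      MeasureTheory.volume (-π) π :=
    (by fun_prop : Continuous _).intervalIntegrable _ _
  rw [intervalIntegral.integral_add intervalIntegrable_const hsum,
    intervalIntegral.integral_finsetSum hterm, intervalIntegral.integral_const,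
    Finset.sum_eq_zero fun i hi => by
      rw [intervalIntegral.integral_const_mul, integral_cos_nat_mul_sub_eq_zero (hn i hi),
        mul_zero]]
  simp only [smul_eq_mul]
  ring

theorem integral_const_add_mul_cos (A B : ℝ) :
    ∫ t in (0 : ℝ)..2 * π, (A + B * cos t) = 2 * π * A := by
  rw [intervalIntegral.integral_add (g := fun t => B * cos t) intervalIntegrable_const
      ((continuous_const.mul continuous_cos).intervalIntegrable _ _),
    intervalIntegral.integral_const, intervalIntegral.integral_const_mul, integral_cos,
    sin_two_pi, sin_zero, smul_eq_mul]
  ring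

theorem integral_sq_const_add_three_cos (S p q r t : ℝ) :
    ∫ x in (-π)..π, (S + 2 * p * cos (x - t) + 2 * q * cos (2 * x - t) + 2 * r * cos x) ^ 2
      = 2 * π * (S ^ 2 + 2 * p ^ 2 + 2 * q ^ 2 + 2 * r ^ 2 + 4 * p * r * cos t) := by
  have hexpand : ∀ x, (S + 2 * p * cos (x - t) + 2 * q * cos (2 * x - t) + 2 * r * cos x) ^ 2
      = (S ^ 2 + 2 * p ^ 2 + 2 * q ^ 2 + 2 * r ^ 2 + 4 * p * r * cos t) + ∑ i : Fin 8,
        ![4 * S * p + 4 * q * r, 4 * S * q + 4 * p * r, 4 * S * r + 4 * p * q, 2 * p ^ 2,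
          2 * q ^ 2, 2 * r ^ 2, 4 * p * q, 4 * q * r] i *
        cos (((![1, 2, 1, 2, 4, 2, 3, 3] : Fin 8 → ℕ) i : ℝ) * x
          - ![t, t, 0, 2 * t, 2 * t, 0, 2 * t, t] i) := by
    intro x
    -- product-to-sum on the expanded square; `cos t` comes from `cos (x - t) * cos x`
    simp only [Fin.sum_univ_eight, Fin.isValue, Matrix.cons_val_zero, Matrix.cons_val_one,
      Matrix.cons_val, Nat.cast_one, Nat.cast_ofNat, one_mul, sub_zero]
    have hAA := two_mul_cos_mul_cos_of_eq (A := x - t) (B := x - t) (sub_self _)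
      (by ring : _ = 2 * x - 2 * t)
    have hBB := two_mul_cos_mul_cos_of_eq (A := 2 * x - t) (B := 2 * x - t) (sub_self _)
      (by ring : _ = 4 * x - 2 * t)
    have hCC := two_mul_cos_mul_cos_of_eq (A := x) (B := x) (sub_self _) (two_mul x).symm
    have hBA := two_mul_cos_mul_cos_of_eq (A := 2 * x - t) (B := x - t) (by ring : _ = x)
      (by ring : _ = 3 * x - 2 * t)
    have hCA := two_mul_cos_mul_cos_of_eq (A := x) (B := x - t) (by ring : _ = t)
      (by ring : _ = 2 * x - t)
    have hBC := two_mul_cos_mul_cos_of_eq (A := 2 * x - t) (B := x) (by ring : _ = x - t)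
      (by ring : _ = 3 * x - t)
    linear_combination 2 * p ^ 2 * hAA + 2 * q ^ 2 * hBB + 2 * r ^ 2 * hCC + 4 * p * q * hBA
      + 4 * p * r * hCA + 4 * q * r * hBC + (2 * p ^ 2 + 2 * q ^ 2 + 2 * r ^ 2) * cos_zero
  simp_rw [hexpand]
  exact integral_const_add_sum_mul_cos _ _ _ _ _ (by decide)

theorem beam_sq_add_sq_eq (c₁ c₂ c₃ x t : ℝ) :
    (-(c₁ * cos (x + t) + c₂ * cos (2 * x) + c₃ * cos (3 * x)) / √π) ^ 2
      + ((c₁ * sin (x + t) + c₂ * sin (2 * x) + c₃ * sin (3 * x)) / √π) ^ 2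
      = (c₁ ^ 2 + c₂ ^ 2 + c₃ ^ 2 + 2 * (c₁ * c₂) * cos (x - t) + 2 * (c₁ * c₃) * cos (2 * x - t)
        + 2 * (c₂ * c₃) * cos x) / π := by
  rw [div_pow, div_pow, sq_sqrt pi_pos.le, ← add_div, neg_sq, sq_add_sq_three_cos_sin,
    show 2 * x - (x + t) = x - t by ring, show 3 * x - (x + t) = 2 * x - t by ring,
    show 3 * x - 2 * x = x by ring]

/-- **Time average of the quartic nonlinearity on the 3-torus of the beam system.**
For `u = -(√a₁ cos(x+t) + √a₂ cos 2x + √a₃ cos 3x)/√π` and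
`v = (√a₁ sin(x+t) + √a₂ sin 2x + √a₃ sin 3x)/√π` one has
`(1/2π) ∫₀^{2π} ∫_{-π}^{π} (u² + v²)²/4 dx dt
  = (1/(2π)) (a₁² + a₂² + a₃² + 4a₁a₂ + 4a₂a₃ + 4a₁a₃)`;
in particular the quadratic form on the right (with symmetric matrix
`!![1,2,2; 2,1,2; 2,2,1]`) is nondegenerate. -/
theorem beam_average_nonlinearity :
    (∀ a1 a2 a3 : ℝ, 0 ≤ a1 → 0 ≤ a2 → 0 ≤ a3 →
      (1 / (2 * π)) * ∫ t in (0:ℝ)..(2 * π), (∫ x in (-π)..π,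
          ((-(Real.sqrt a1 * Real.cos (x + t) + Real.sqrt a2 * Real.cos (2 * x) +
              Real.sqrt a3 * Real.cos (3 * x)) / Real.sqrt π) ^ 2 +
           ((Real.sqrt a1 * Real.sin (x + t) + Real.sqrt a2 * Real.sin (2 * x) +
              Real.sqrt a3 * Real.sin (3 * x)) / Real.sqrt π) ^ 2) ^ 2 / 4)
        = (1 / (2 * π)) *
            (a1 ^ 2 + a2 ^ 2 + a3 ^ 2 + 4 * a1 * a2 + 4 * a2 * a3 + 4 * a1 * a3)) ∧
    -- nondegeneracy of the quadratic form `a ↦ aᵀ !![1,2,2;2,1,2;2,2,1] a`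
    Matrix.det !![(1:ℝ), 2, 2; 2, 1, 2; 2, 2, 1] ≠ 0 := by
  refine ⟨fun a₁ a₂ a₃ h₁ h₂ h₃ => ?_, ?_⟩
  · simp_rw [beam_sq_add_sq_eq, div_pow, div_div, intervalIntegral.integral_div,
      integral_sq_const_add_three_cos, intervalIntegral.integral_const_mul,
      integral_const_add_mul_cos, mul_pow, sq_sqrt h₁, sq_sqrt h₂, sq_sqrt h₃]
    field_simp
    ring
  · rw [show Matrix.det !![(1:ℝ), 2, 2; 2, 1, 2; 2, 2, 1] = 5 by
      simp [Matrix.det_fin_three]; norm_num]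
    norm_num
end
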